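/- Let n ≥ 1. The family of Boolean functions (h_a)_{a ∈ 𝔽₂ⁿ, aₙ = 0}, where h_a = x^a ⊕ M_a, is a basis of the 𝔽₂-vector space C_n of coincident functions with n variables: the 2^{n−1} functions h_a (for a with last coordinate 0) are linearly independent over 𝔽₂, and every coincident function is the sum of the h_a over some subset of {a ∈ 𝔽₂ⁿ : aₙ = 0}. -/

import Mathlib

/-- Möbius transform of a Boolean function with n variables:
`μₙ(f)(u) = ⊕_{v ≼ u} f(v)` where `≼` is componentwise. -/
def mobius {n : ℕ} (f : (Fin n → ZMod 2) → ZMod 2) : (Fin n → ZMod 2) → ZMod 2 :=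
  fun u => ∑ v ∈ Finset.univ.filter (fun v : Fin n → ZMod 2 => ∀ i, (v i).val ≤ (u i).val), f v
/-- The monomial `x^u`. -/
def monomial {n : ℕ} (u : Fin n → ZMod 2) : (Fin n → ZMod 2) → ZMod 2 :=
  fun a => ∏ i ∈ Finset.univ.filter (fun i => u i = 1), a i

/-- The minterm `M_u`. -/
def minterm {n : ℕ} (u : Fin n → ZMod 2) : (Fin n → ZMod 2) → ZMod 2 :=
  fun a => if a = u then 1 else 0

/-!
On functions of product form `v ↦ ∏ i, φ i (v i)` the Möbius transform acts coordinatewise, which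
gives `μ M_u = x^u` and `μ x^u = M_u`; hence `μ` is an involution and the monomials are linearly
independent. Over `𝔽₂` the map `L = 1 + μ` then satisfies `L ∘ L = 0`, so
`h_u = L x^u ∈ range L ⊆ ker L = C_n`.

Evaluating at a point with `x j = 1` kills every minterm `M_a` with `a j = 0` without changing
`x^a`, so the `h_a` with `a j = 0` inherit the independence of the monomials. They span a subspace
of `range L` of dimension `2^(n-1)`; as `range L ⊆ ker L` and the two dimensions add up to `2^n`,
this subspace is all of `ker L`.
-/

open Finset Module

theorem Fintype.card_subtype_apply_eq {ι α : Type*} [Fintype ι] [DecidableEq ι] [Fintype α]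
    [DecidableEq α] (j : ι) (x : α) :
    Fintype.card {a : ι → α // a j = x} = Fintype.card α ^ (Fintype.card ι - 1) := by
  rw [Fintype.card_subtype, ← Fintype.piFinset_univ,
    Fintype.card_filter_piFinset_const_eq_of_mem _ _ (mem_univ x), card_univ]

theorem Submodule.exists_finset_sum_eq_of_mem_span_zmod_two {ι V : Type*} [Fintype ι]
    [AddCommGroup V] [Module (ZMod 2) V] {v : ι → V} {x : V}
    (hx : x ∈ Submodule.span (ZMod 2) (Set.range v)) : ∃ S : Finset ι, x = ∑ i ∈ S, v i := by
  classical
  obtain ⟨c, rfl⟩ := (Submodule.mem_span_range_iff_exists_fun (ZMod 2)).mp hx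
  refine ⟨univ.filter (fun i => c i = 1), ?_⟩
  rw [sum_filter]
  refine sum_congr rfl fun i _ => ?_
  have : ∀ t : ZMod 2, t = 0 ∨ t = 1 := by decide
  rcases this (c i) with h | h <;> simp [h]

theorem LinearMap.eq_ker_of_le_range_of_comp_self_eq_zero {K V : Type*} [DivisionRing K]
    [AddCommGroup V] [Module K V] [FiniteDimensional K V] {L : V →ₗ[K] V} (hL : L ∘ₗ L = 0)
    {W : Submodule K V} (hW : W ≤ range L) (hdim : finrank K V ≤ 2 * finrank K W) :
    W = ker L := by
  have hrange : range L ≤ ker L := range_le_ker_iff.mpr hL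
  refine Submodule.eq_of_le_of_finrank_le (hW.trans hrange) ?_
  have := finrank_range_add_finrank_ker L
  have := Submodule.finrank_mono hW
  omega

variable {n : ℕ}

theorem mobius_prod (φ : Fin n → ZMod 2 → ZMod 2) (a : Fin n → ZMod 2) :
    mobius (fun v => ∏ i, φ i (v i)) a =
      ∏ i, ∑ t ∈ univ.filter (fun t : ZMod 2 => t.val ≤ (a i).val), φ i t := by
  rw [prod_univ_sum]
  unfold mobius
  congr 1
  ext v
  simp [Fintype.mem_piFinset]

theorem minterm_eq_prod (u : Fin n → ZMod 2) :
    minterm u = fun a => ∏ i, if a i = u i then 1 else 0 := by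
  funext a
  rw [prod_boole]
  simp [minterm, funext_iff]

theorem monomial_eq_prod (u : Fin n → ZMod 2) :
    monomial u = fun a => ∏ i, if u i = 1 then a i else 1 := by
  funext a
  exact prod_filter _ _

theorem mobius_minterm (u : Fin n → ZMod 2) : mobius (minterm u) = monomial u := by
  have key : ∀ x y : ZMod 2, ∑ t ∈ univ.filter (fun t : ZMod 2 => t.val ≤ x.val),
      (if t = y then 1 else 0) = if y = 1 then x else 1 := by decide
  rw [minterm_eq_prod, monomial_eq_prod]
  funext a
  exact (mobius_prod (fun i t => if t = u i then 1 else 0) a).trans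
    (prod_congr rfl fun i _ => key (a i) (u i))

theorem mobius_monomial (u : Fin n → ZMod 2) : mobius (monomial u) = minterm u := by
  have key : ∀ x y : ZMod 2, ∑ t ∈ univ.filter (fun t : ZMod 2 => t.val ≤ x.val),
      (if y = 1 then t else 1) = if x = y then 1 else 0 := by decide
  rw [minterm_eq_prod, monomial_eq_prod]
  funext a
  exact (mobius_prod (fun i t => if u i = 1 then t else 1) a).trans
    (prod_congr rfl fun i _ => key (a i) (u i))

variable (n) in
def mobiusLinear : ((Fin n → ZMod 2) → ZMod 2) →ₗ[ZMod 2] ((Fin n → ZMod 2) → ZMod 2) where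
  toFun := mobius
  map_add' f g := by
    funext u
    simp [mobius, sum_add_distrib]
  map_smul' c f := by
    funext u
    simp [mobius, mul_sum]

theorem mobiusLinear_apply (f : (Fin n → ZMod 2) → ZMod 2) : mobiusLinear n f = mobius f := rfl

theorem mobius_add (f g : (Fin n → ZMod 2) → ZMod 2) : mobius (f + g) = mobius f + mobius g :=
  map_add (mobiusLinear n) f g

theorem minterm_eq_single (u : Fin n → ZMod 2) : minterm u = Pi.single u 1 := by
  funext a
  simp [minterm, Pi.single_apply]

theorem mobius_involutive : Function.Involutive (mobius (n := n)) := by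
  have : mobiusLinear n ∘ₗ mobiusLinear n = LinearMap.id :=
    (Pi.basisFun (ZMod 2) (Fin n → ZMod 2)).ext fun u => by
      simp [mobiusLinear_apply, ← minterm_eq_single, mobius_minterm, mobius_monomial]
  exact fun f => LinearMap.congr_fun this f

theorem linearIndependent_monomial :
    LinearIndependent (ZMod 2) (monomial : (Fin n → ZMod 2) → (Fin n → ZMod 2) → ZMod 2) := by
  have := (Pi.basisFun (ZMod 2) (Fin n → ZMod 2)).linearIndependent.map' (mobiusLinear n)
    (LinearMap.ker_eq_bot.mpr mobius_involutive.injective)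
  have hmap : ⇑(mobiusLinear n) ∘ ⇑(Pi.basisFun (ZMod 2) (Fin n → ZMod 2)) = monomial := by
    funext u
    simp [mobiusLinear_apply, ← minterm_eq_single, mobius_minterm]
  rwa [hmap] at this

theorem monomial_update_of_eq_zero {u : Fin n → ZMod 2} {j : Fin n} (hu : u j = 0)
    (a : Fin n → ZMod 2) (x : ZMod 2) : monomial u (Function.update a j x) = monomial u a := by
  refine prod_congr rfl fun i hi => Function.update_of_ne ?_ _ _
  rintro rfl
  simp [hu] at hi

theorem minterm_update_one_of_eq_zero {u : Fin n → ZMod 2} {j : Fin n} (hu : u j = 0)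
    (a : Fin n → ZMod 2) : minterm u (Function.update a j 1) = 0 := by
  rw [minterm, if_neg]
  intro h
  simpa [hu] using congr_fun h j

theorem linearIndependent_monomial_add_minterm (j : Fin n) :
    LinearIndependent (ZMod 2)
      (fun a : {a : Fin n → ZMod 2 // a j = 0} => monomial a.1 + minterm a.1) := by
  rw [Fintype.linearIndependent_iff]
  intro g hg
  have hmonomial : ∑ a, g a • monomial a.1 = 0 := by
    funext x
    set y := Function.update x j 1
    calc (∑ a, g a • monomial a.1) x = ∑ a, g a * (monomial a.1 y + minterm a.1 y) := by
          simp only [Finset.sum_apply, Pi.smul_apply, smul_eq_mul]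
          refine sum_congr rfl fun a _ => ?_
          rw [monomial_update_of_eq_zero a.2, minterm_update_one_of_eq_zero a.2, add_zero]
      _ = (∑ a, g a • (monomial a.1 + minterm a.1)) y := by simp [Finset.sum_apply, mul_add]
      _ = 0 := by rw [hg]; rfl
  exact Fintype.linearIndependent_iff.mp
    (linearIndependent_monomial.comp _ Subtype.val_injective) g hmonomial

theorem mem_span_monomial_add_minterm_of_mobius_eq (j : Fin n) {f : (Fin n → ZMod 2) → ZMod 2}
    (hf : mobius f = f) :
    f ∈ Submodule.span (ZMod 2)
      (Set.range fun a : {a : Fin n → ZMod 2 // a j = 0} => monomial a.1 + minterm a.1) := by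
  set L := 1 + mobiusLinear n
  have hL : ∀ g, L g = g + mobius g := fun _ => rfl
  have hLL : L ∘ₗ L = 0 := by
    refine LinearMap.ext fun g => funext fun x => ?_
    simp only [LinearMap.comp_apply, hL]
    rw [mobius_add, mobius_involutive g, add_comm (mobius g) g]
    exact CharTwo.add_self_eq_zero ((g + mobius g) x)
  set W := Submodule.span (ZMod 2)
    (Set.range fun a : {a : Fin n → ZMod 2 // a j = 0} => monomial a.1 + minterm a.1)
  have hW : W ≤ LinearMap.range L := by
    rw [Submodule.span_le]
    rintro _ ⟨a, rfl⟩
    exact ⟨monomial a.1, by rw [hL, mobius_monomial]⟩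
  have hdim : finrank (ZMod 2) ((Fin n → ZMod 2) → ZMod 2) ≤ 2 * finrank (ZMod 2) W := by
    rw [finrank_span_eq_card (linearIndependent_monomial_add_minterm j),
      Fintype.card_subtype_apply_eq, finrank_pi, Fintype.card_fun]
    simp only [ZMod.card, Fintype.card_fin, ← pow_succ']
    exact Nat.pow_le_pow_right two_pos (by have := j.pos; omega)
  rw [LinearMap.eq_ker_of_le_range_of_comp_self_eq_zero hLL hW hdim, LinearMap.mem_ker, hL, hf]
  exact funext fun x => CharTwo.add_self_eq_zero (f x)

theorem stmt17 (n : ℕ) (hn : 1 ≤ n) :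
    Fintype.card {a : Fin n → ZMod 2 // a ⟨n - 1, by omega⟩ = 0} = 2 ^ (n - 1) ∧
    LinearIndependent (ZMod 2)
      (fun a : {a : Fin n → ZMod 2 // a ⟨n - 1, by omega⟩ = 0} =>
        (fun x => monomial a.1 x + minterm a.1 x)) ∧
    (∀ f : (Fin n → ZMod 2) → ZMod 2, mobius f = f →
      ∃ S : Finset {a : Fin n → ZMod 2 // a ⟨n - 1, by omega⟩ = 0},
        f = ∑ a ∈ S, (fun x => monomial a.1 x + minterm a.1 x)) := by
  refine ⟨?_, linearIndependent_monomial_add_minterm _, fun f hf =>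
    Submodule.exists_finset_sum_eq_of_mem_span_zmod_two
      (mem_span_monomial_add_minterm_of_mobius_eq _ hf)⟩
  rw [Fintype.card_subtype_apply_eq, ZMod.card, Fintype.card_fin]
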